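/- Satisfiability checking of programs reduces to satisfiability checking of predicates: a program P is satisfiable (i.e., has an open answer set) if and only if the fresh n-ary predicate p is satisfiable with respect to the program P ∪ { p(X⃗) ∨ not p(X⃗) ← }, where p is a predicate symbol not occurring in P and X⃗ is a tuple of n distinct variables. -/

import Mathlib

/-! Core formalization of (open) answer set programming, following
Heymans et al., "Guarded Hybrid Knowledge Bases". -/

namespace GH

/-- Terms over constants `C` and variables `V`. -/
inductive Term (C V : Type) : Type
  | const : C → Term C V
  | var : V → Term C V

/-- Atoms over predicate symbols `P`: regular atoms `p(t⃗)` and equality atoms `t = s`. -/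
inductive Atom (P C V : Type) : Type
  | app : P → List (Term C V) → Atom P C V
  | eq : Term C V → Term C V → Atom P C V

/-- Literals: atoms `a` or naf-literals `not a`. -/
inductive Lit (P C V : Type) : Type
  | pos : Atom P C V → Lit P C V
  | naf : Atom P C V → Lit P C V

/-- A rule `α ← β`: head `α` and body `β` are finite sets of literals (represented as lists). -/
structure Rule (P C V : Type) : Type where
  head : List (Lit P C V)
  body : List (Lit P C V)

variable {P C V D : Type}

/-- A regular atom is an equality-free atom. -/
def Atom.isRegular : Atom P C V → Prop
  | .app _ _ => True
  | .eq _ _ => False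

/-- The positive atoms of a list of literals. -/
def posAtoms (l : List (Lit P C V)) : List (Atom P C V) :=
  l.filterMap (fun lit => match lit with | .pos a => some a | .naf _ => none)

/-- Well-formedness of rules: at most one positive atom in the head,
and every positive head atom is regular. -/
def Rule.wf (r : Rule P C V) : Prop :=
  (posAtoms r.head).length ≤ 1 ∧ ∀ a ∈ posAtoms r.head, a.isRegular

/-- A program is a (countable) set of well-formed rules; we record well-formedness
as a predicate on sets of rules. -/
def IsProgram (Pr : Set (Rule P C V)) : Prop := ∀ r ∈ Pr, r.wf

/-- The free rule `p(t⃗) ∨ not p(t⃗) ← `. -/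
def freeRule (p : P) (ts : List (Term C V)) : Rule P C V :=
  ⟨[Lit.pos (Atom.app p ts), Lit.naf (Atom.app p ts)], []⟩

/-- Occurrence of a predicate symbol in an atom. -/
def Atom.hasPred (p : P) : Atom P C V → Prop
  | .app q _ => q = p
  | .eq _ _ => False

def Lit.hasPred (p : P) : Lit P C V → Prop
  | .pos a => a.hasPred p
  | .naf a => a.hasPred p

def Rule.hasPred (r : Rule P C V) (p : P) : Prop :=
  ∃ l ∈ r.head ++ r.body, l.hasPred p

/-! ### Variables, free rules and guardedness -/

def Term.varsL : Term C V → List V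
  | .const _ => []
  | .var v => [v]

def Atom.varsL : Atom P C V → List V
  | .app _ ts => (ts.map Term.varsL).foldr (· ++ ·) []
  | .eq t s => t.varsL ++ s.varsL

def Lit.varsL : Lit P C V → List V
  | .pos a => a.varsL
  | .naf a => a.varsL

def Rule.varsL (r : Rule P C V) : List V :=
  ((r.head ++ r.body).map Lit.varsL).foldr (· ++ ·) []

/-- A free rule is a rule of the form `q(X⃗) ∨ not q(X⃗) ← ` for a tuple `X⃗` of
pairwise distinct variables. -/
def Rule.isFree (r : Rule P C V) : Prop :=
  ∃ (p : P) (xs : List V), xs.Nodup ∧ r = freeRule p (xs.map Term.var)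

/-- A rule is guarded if some positive body atom (the guard) contains all
variables of the rule. -/
def Rule.isGuarded (r : Rule P C V) : Prop :=
  ∃ a : Atom P C V, Lit.pos a ∈ r.body ∧ ∀ v ∈ r.varsL, v ∈ a.varsL

/-- A guarded program: a program each of whose non-free rules is guarded. -/
def GuardedProgram (Pr : Set (Rule P C V)) : Prop :=
  IsProgram Pr ∧ ∀ r ∈ Pr, r.isFree ∨ r.isGuarded

/-! ### Ground programs, answer sets -/

/-- Ground atoms over the domain `D`. -/
inductive GAtom (P D : Type) : Type
  | app : P → List D → GAtom P D
  | eq : D → D → GAtom P D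

inductive GLit (P D : Type) : Type
  | pos : GAtom P D → GLit P D
  | naf : GAtom P D → GLit P D

structure GRule (P D : Type) : Type where
  head : List (GLit P D)
  body : List (GLit P D)

def Term.ground (σ : C → D) (ν : V → D) : Term C V → D
  | .const c => σ c
  | .var v => ν v

def Atom.ground (σ : C → D) (ν : V → D) : Atom P C V → GAtom P D
  | .app p ts => .app p (ts.map (Term.ground σ ν))
  | .eq t s => .eq (t.ground σ ν) (s.ground σ ν)

def Lit.ground (σ : C → D) (ν : V → D) : Lit P C V → GLit P D
  | .pos a => .pos (a.ground σ ν)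
  | .naf a => .naf (a.ground σ ν)

def Rule.ground (r : Rule P C V) (σ : C → D) (ν : V → D) : GRule P D :=
  ⟨r.head.map (Lit.ground σ ν), r.body.map (Lit.ground σ ν)⟩

/-- The grounding `P_U` of a program w.r.t. a pre-interpretation `U = (D, σ)`:
all ground instances of rules of the program over `D`, with constants
interpreted via `σ`. -/
def groundProg (Pr : Set (Rule P C V)) (σ : C → D) : Set (GRule P D) :=
  { gr | ∃ r ∈ Pr, ∃ ν : V → D, gr = r.ground σ ν }

/-- Truth of a ground atom w.r.t. an interpretation (a set of regular ground atoms):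
`p(d⃗)` holds iff it belongs to the interpretation; `d = e` holds iff `d` and `e` are equal. -/
def GAtom.holds (M : Set (GAtom P D)) : GAtom P D → Prop
  | .app p ds => GAtom.app p ds ∈ M
  | .eq d e => d = e

def GLit.holds (M : Set (GAtom P D)) : GLit P D → Prop
  | .pos a => a.holds M
  | .naf a => ¬ a.holds M

/-- Satisfaction of a ground rule. -/
def GRule.satisfied (M : Set (GAtom P D)) (r : GRule P D) : Prop :=
  (∀ l ∈ r.body, l.holds M) → ∃ l ∈ r.head, l.holds M

/-- `M` is a model of the ground program `Q`. -/
def GModel (Q : Set (GRule P D)) (M : Set (GAtom P D)) : Prop :=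
  ∀ r ∈ Q, r.satisfied M

def GLit.isPosB : GLit P D → Bool
  | .pos _ => true
  | .naf _ => false

/-- The positive part `α⁺ ← β⁺` of a ground rule. -/
def GRule.posPart (r : GRule P D) : GRule P D :=
  ⟨r.head.filter GLit.isPosB, r.body.filter GLit.isPosB⟩

/-- The GL-reduct keeps a rule `α ← β` iff `M ⊨ not β⁻` and `M ⊨ α⁻`. -/
def GRule.reductKeep (M : Set (GAtom P D)) (r : GRule P D) : Prop :=
  (∀ a : GAtom P D, GLit.naf a ∈ r.body → ¬ a.holds M) ∧
  (∀ a : GAtom P D, GLit.naf a ∈ r.head → a.holds M)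

/-- The GL-style reduct `Q^M` of a ground program. -/
def progReduct (Q : Set (GRule P D)) (M : Set (GAtom P D)) : Set (GRule P D) :=
  { r' | ∃ r ∈ Q, r.reductKeep M ∧ r' = r.posPart }

/-- `M` is an answer set of the ground program `Q`: `M` is a subset-minimal
model of the reduct `Q^M`. -/
def AnswerSet (Q : Set (GRule P D)) (M : Set (GAtom P D)) : Prop :=
  GModel (progReduct Q M) M ∧
    ∀ M' ⊆ M, GModel (progReduct Q M) M' → M' = M

/-- A program is satisfiable iff it has an open answer set `(U, M)`. -/
def ProgSatisfiable (Pr : Set (Rule P C V)) : Prop :=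
  ∃ (D : Type) (_ : Nonempty D) (σ : C → D) (M : Set (GAtom P D)),
    AnswerSet (groundProg Pr σ) M

/-- An `n`-ary predicate `p` is satisfiable w.r.t. `Pr` iff some open answer set
`((D, σ), M)` contains `p(x⃗)` for some `x⃗ ∈ Dⁿ`. -/
def PredSatN (Pr : Set (Rule P C V)) (p : P) (n : ℕ) : Prop :=
  ∃ (D : Type) (_ : Nonempty D) (σ : C → D) (M : Set (GAtom P D)),
    AnswerSet (groundProg Pr σ) M ∧
      ∃ ds : List D, ds.length = n ∧ GAtom.app p ds ∈ M

/-- Satisfiability of a predicate (arity left implicit). -/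
def PredSat (Pr : Set (Rule P C V)) (p : P) : Prop :=
  ∃ (D : Type) (_ : Nonempty D) (σ : C → D) (M : Set (GAtom P D)),
    AnswerSet (groundProg Pr σ) M ∧ ∃ ds : List D, GAtom.app p ds ∈ M

end GH

namespace GH

/-! Since `p` does not occur in `Pr`, the reduct of a grounding of `Pr` depends only on the part
of an interpretation off `p`, and its rules do not mention `p`. The free rule
`p(X⃗) ∨ not p(X⃗) ←` contributes to the reduct exactly the facts `p(x⃗) ←` for the instances
`p(x⃗)` that the interpretation contains, so it lets an answer set contain any instances of `p`
while keeping them minimal. Hence adding one instance of `p(X⃗)` to an answer set of `Pr` gives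
an answer set of the extended program, and deleting the `p`-atoms from an answer set of the
extended program gives an answer set of `Pr`. -/

variable {P C V D : Type}

def GLit.atom : GLit P D → GAtom P D
  | .pos a => a
  | .naf a => a

def GAtom.Avoids (p : P) : GAtom P D → Prop
  | .app q _ => q ≠ p
  | .eq _ _ => True

def GRule.Avoids (p : P) (gr : GRule P D) : Prop :=
  ∀ l ∈ gr.head ++ gr.body, l.atom.Avoids p

def AgreeOff (p : P) (M M' : Set (GAtom P D)) : Prop :=
  ∀ a : GAtom P D, a.Avoids p → (a ∈ M ↔ a ∈ M')

section AgreeOff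

variable {p : P} {M M' : Set (GAtom P D)}

lemma GAtom.not_avoids_app (p : P) (ds : List D) : ¬ (GAtom.app p ds).Avoids p :=
  fun h => h rfl

lemma agreeOff_sep_avoids (p : P) (M : Set (GAtom P D)) :
    AgreeOff p {a ∈ M | a.Avoids p} M :=
  fun _ ha => ⟨fun h => h.1, fun h => ⟨h, ha⟩⟩

lemma agreeOff_union_of_not_avoids {S : Set (GAtom P D)} (hS : ∀ a ∈ S, ¬ a.Avoids p) :
    AgreeOff p M (M ∪ S) :=
  fun a ha => ⟨Or.inl, fun h => h.resolve_right fun haS => hS a haS ha⟩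

lemma GAtom.holds_congr (h : AgreeOff p M M') {a : GAtom P D} (ha : a.Avoids p) :
    a.holds M ↔ a.holds M' := by
  cases a with
  | app => exact h _ ha
  | eq => exact Iff.rfl

lemma GLit.holds_congr (h : AgreeOff p M M') {l : GLit P D} (hl : l.atom.Avoids p) :
    l.holds M ↔ l.holds M' := by
  cases l with
  | pos => exact GAtom.holds_congr h hl
  | naf => exact not_congr (GAtom.holds_congr h hl)

lemma GRule.satisfied_congr (h : AgreeOff p M M') {gr : GRule P D} (hgr : gr.Avoids p) :
    gr.satisfied M ↔ gr.satisfied M' := by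
  have hlit : ∀ l ∈ gr.head ++ gr.body, l.holds M ↔ l.holds M' :=
    fun l hl => GLit.holds_congr h (hgr l hl)
  unfold GRule.satisfied
  refine imp_congr (forall₂_congr fun l hl => hlit l (List.mem_append_right _ hl))
    (exists_congr fun l => and_congr_right fun hl => hlit l (List.mem_append_left _ hl))

lemma GRule.reductKeep_congr (h : AgreeOff p M M') {gr : GRule P D} (hgr : gr.Avoids p) :
    gr.reductKeep M ↔ gr.reductKeep M' := by
  have hatom : ∀ a, GLit.naf a ∈ gr.head ++ gr.body → (a.holds M ↔ a.holds M') :=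
    fun a ha => GAtom.holds_congr h (hgr _ ha)
  unfold GRule.reductKeep
  exact and_congr
    (forall₂_congr fun a ha => not_congr (hatom a (List.mem_append_right _ ha)))
    (forall₂_congr fun a ha => hatom a (List.mem_append_left _ ha))

lemma gModel_congr {Q : Set (GRule P D)} (hQ : ∀ gr ∈ Q, gr.Avoids p) (h : AgreeOff p M M') :
    GModel Q M ↔ GModel Q M' :=
  forall₂_congr fun gr hgr => GRule.satisfied_congr h (hQ gr hgr)

end AgreeOff

lemma GRule.Avoids.posPart {p : P} {gr : GRule P D} (hgr : gr.Avoids p) :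
    gr.posPart.Avoids p := by
  intro l hl
  apply hgr
  rcases List.mem_append.mp hl with h | h
  · exact List.mem_append_left _ (List.mem_of_mem_filter h)
  · exact List.mem_append_right _ (List.mem_of_mem_filter h)

lemma Rule.avoids_ground {p : P} {r : Rule P C V} (hr : ¬ r.hasPred p) (σ : C → D)
    (ν : V → D) : (r.ground σ ν).Avoids p := by
  intro l hl
  obtain ⟨l₀, hl₀, rfl⟩ : ∃ l₀ ∈ r.head ++ r.body, l = l₀.ground σ ν := by
    simpa [Rule.ground, or_and_right, exists_or, eq_comm] using hl
  rcases l₀ with (⟨q, _⟩ | _) | (⟨q, _⟩ | _)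
  all_goals first | trivial | exact fun hq => hr ⟨_, hl₀, hq⟩

lemma avoids_groundProg {p : P} {Pr : Set (Rule P C V)} (hfresh : ∀ r ∈ Pr, ¬ r.hasPred p)
    (σ : C → D) : ∀ gr ∈ groundProg Pr σ, gr.Avoids p := by
  rintro _ ⟨r, hr, ν, rfl⟩
  exact Rule.avoids_ground (hfresh r hr) σ ν

lemma groundProg_union (A B : Set (Rule P C V)) (σ : C → D) :
    groundProg (A ∪ B) σ = groundProg A σ ∪ groundProg B σ := by
  ext
  simp only [groundProg, Set.mem_ofPred_eq, Set.mem_union, or_and_right, exists_or]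

lemma progReduct_union (Q Q' : Set (GRule P D)) (M : Set (GAtom P D)) :
    progReduct (Q ∪ Q') M = progReduct Q M ∪ progReduct Q' M := by
  ext
  simp only [progReduct, Set.mem_ofPred_eq, Set.mem_union, or_and_right, exists_or]

lemma gModel_union {Q Q' : Set (GRule P D)} {M : Set (GAtom P D)} :
    GModel (Q ∪ Q') M ↔ GModel Q M ∧ GModel Q' M :=
  forall₂_or_left

lemma avoids_of_mem_progReduct {p : P} {Q : Set (GRule P D)} (hQ : ∀ gr ∈ Q, gr.Avoids p)
    (M : Set (GAtom P D)) : ∀ gr ∈ progReduct Q M, gr.Avoids p := by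
  rintro _ ⟨gr, hgr, -, rfl⟩
  exact (hQ gr hgr).posPart

lemma progReduct_congr {p : P} {Q : Set (GRule P D)} (hQ : ∀ gr ∈ Q, gr.Avoids p)
    {M M' : Set (GAtom P D)} (h : AgreeOff p M M') : progReduct Q M = progReduct Q M' := by
  ext
  exact exists_congr fun gr => and_congr_right fun hgr =>
    and_congr_left fun _ => GRule.reductKeep_congr h (hQ gr hgr)

lemma gModel_progReduct_freeRule_iff {p : P} {ts : List (Term C V)} {σ : C → D}
    {M M' : Set (GAtom P D)} :
    GModel (progReduct (groundProg {freeRule p ts} σ) M) M' ↔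
      ∀ ν : V → D, (Atom.app p ts).ground σ ν ∈ M → (Atom.app p ts).ground σ ν ∈ M' := by
  constructor
  · intro hM' ν hν
    have hfact : (⟨[.pos ((Atom.app p ts).ground σ ν)], []⟩ : GRule P D) ∈
        progReduct (groundProg {freeRule p ts} σ) M := by
      refine ⟨_, ⟨_, rfl, ν, rfl⟩, ⟨by simp [Rule.ground, freeRule], fun a ha => ?_⟩, rfl⟩
      obtain rfl : a = (Atom.app p ts).ground σ ν := by
        simpa [Rule.ground, freeRule, Lit.ground] using ha
      exact hν
    obtain ⟨l, hl, hlM'⟩ := hM' _ hfact (by simp)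
    obtain rfl := List.mem_singleton.mp hl
    exact hlM'
  · rintro h _ ⟨_, ⟨r, rfl, ν, rfl⟩, ⟨-, hhead⟩, rfl⟩ -
    refine ⟨.pos ((Atom.app p ts).ground σ ν), ?_, h ν ?_⟩
    · simp [GRule.posPart, GLit.isPosB, Rule.ground, freeRule, Lit.ground]
    · exact hhead ((Atom.app p ts).ground σ ν) (by simp [Rule.ground, freeRule, Lit.ground])

section FreshPredicate

variable {p : P} {Q : Set (GRule P D)} {ts : List (Term C V)} {σ : C → D}

lemma AnswerSet.union_freeRule (hQ : ∀ gr ∈ Q, gr.Avoids p) {N : Set (GAtom P D)}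
    (hN : AnswerSet Q N) (ν : V → D) :
    AnswerSet (Q ∪ groundProg {freeRule p ts} σ) (N ∪ {(Atom.app p ts).ground σ ν}) := by
  set A := (Atom.app p ts).ground σ ν
  have hA : ∀ a ∈ ({A} : Set (GAtom P D)), ¬ a.Avoids p := by
    rintro _ rfl
    exact GAtom.not_avoids_app _ _
  have hag : AgreeOff p N (N ∪ {A}) := agreeOff_union_of_not_avoids hA
  have hQN := avoids_of_mem_progReduct hQ N
  rw [AnswerSet, progReduct_union, ← progReduct_congr hQ hag]
  refine ⟨gModel_union.mpr ⟨(gModel_congr hQN hag).mp hN.1,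
    gModel_progReduct_freeRule_iff.mpr fun _ => id⟩, fun M hMsub hM => ?_⟩
  obtain ⟨hMQ, hMfree⟩ := gModel_union.mp hM
  have hAM : A ∈ M := gModel_progReduct_freeRule_iff.mp hMfree ν (Or.inr rfl)
  have hNM : {a ∈ M | a.Avoids p} = N :=
    hN.2 _ (fun a ⟨haM, ha⟩ => (hMsub haM).resolve_right fun haA => hA a haA ha)
      ((gModel_congr hQN (agreeOff_sep_avoids p M)).mpr hMQ)
  refine hMsub.antisymm (Set.union_subset (fun a ha => ?_) (Set.singleton_subset_iff.mpr hAM))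
  rw [← hNM] at ha
  exact ha.1

lemma AnswerSet.sep_avoids_of_union_freeRule (hQ : ∀ gr ∈ Q, gr.Avoids p)
    {M : Set (GAtom P D)} (hM : AnswerSet (Q ∪ groundProg {freeRule p ts} σ) M) :
    AnswerSet Q {a ∈ M | a.Avoids p} := by
  have hag := agreeOff_sep_avoids p M
  have hQM := avoids_of_mem_progReduct hQ M
  have hMQ := (gModel_union.mp (progReduct_union Q _ M ▸ hM.1)).1
  rw [AnswerSet, progReduct_congr hQ hag]
  refine ⟨(gModel_congr hQM hag).mpr hMQ, fun N hNsub hN => ?_⟩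
  set M' := N ∪ {a ∈ M | ¬ a.Avoids p}
  have hag' : AgreeOff p N M' := agreeOff_union_of_not_avoids fun _ ha => ha.2
  have hM'sub : M' ⊆ M :=
    Set.union_subset (hNsub.trans (Set.sep_subset _ _)) (Set.sep_subset _ _)
  have hM'M : M' = M := hM.2 M' hM'sub <| by
    rw [progReduct_union]
    exact gModel_union.mpr ⟨(gModel_congr hQM hag').mp hN,
      gModel_progReduct_freeRule_iff.mpr fun _ hν => Or.inr ⟨hν, GAtom.not_avoids_app _ _⟩⟩
  refine hNsub.antisymm fun a ⟨haM, ha⟩ => ?_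
  rw [← hM'M] at haM
  exact haM.resolve_right fun h => h.2 ha

end FreshPredicate

theorem progSat_iff_freshPredSat_general
    (P C V : Type) (Pr : Set (Rule P C V))
    (p : P) (hfresh : ∀ r ∈ Pr, ¬ r.hasPred p)
    (n : ℕ) (X : Fin n → V) :
    ProgSatisfiable Pr ↔
      PredSatN (Pr ∪ {freeRule p ((List.ofFn X).map Term.var)}) p n := by
  constructor
  · rintro ⟨D, ⟨d⟩, σ, N, hN⟩
    have hext := hN.union_freeRule (ts := (List.ofFn X).map Term.var) (σ := σ)
      (avoids_groundProg hfresh σ) fun _ => d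
    rw [← groundProg_union] at hext
    exact ⟨D, ⟨d⟩, σ, _, hext, _, by simp, Set.mem_union_right _ rfl⟩
  · rintro ⟨D, hD, σ, M, hM, -⟩
    rw [groundProg_union] at hM
    exact ⟨D, hD, σ, _, hM.sep_avoids_of_union_freeRule (avoids_groundProg hfresh σ)⟩

/-- Satisfiability checking of programs reduces to satisfiability
checking of predicates: a program `Pr` is satisfiable (has an open answer set)
iff the fresh `n`-ary predicate `p` is satisfiable w.r.t.
`Pr ∪ { p(X⃗) ∨ not p(X⃗) ← }`, where `p` does not occur in `Pr` and `X⃗` is a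
tuple of `n` distinct variables. -/
theorem progSat_iff_freshPredSat
    (P C V : Type) (Pr : Set (Rule P C V)) (hPr : IsProgram Pr)
    (p : P) (hfresh : ∀ r ∈ Pr, ¬ r.hasPred p)
    (n : ℕ) (X : Fin n → V) (hX : Function.Injective X) :
    ProgSatisfiable Pr ↔
      PredSatN (Pr ∪ {freeRule p ((List.ofFn X).map Term.var)}) p n :=
  progSat_iff_freshPredSat_general P C V Pr p hfresh n X

end GH
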